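/- arXiv:1101.4702 — 2 statements merged into one kernel-verified Lean document; each statement's English description precedes it below -/
import Mathlib

section
/- Let d ≥ 2 and N ≥ 1 be integers, let I₁, I₂, I₃ be three pairwise disjoint aligned arcs of level N in 𝕋 = ℝ/ℤ, and let A₀ = I₁ ∪ I₂ ∪ I₃. Let g : 𝕋 → 𝕋 be multiplication by d. Then for every n ≥ 0, the set 𝕋 \ g^{-n}(A₀) is a union of 3·d^n pairwise disjoint closed arcs (possibly degenerate to points), each of length strictly less than d^{-n}. -/
open Set

noncomputable section

/-- The aligned arc of level `n` with index `j` in the circle `ℝ/ℤ`: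
the image of the open interval `(j/d^n, (j+1)/d^n) ⊂ ℝ`. -/
def alignedArc (d n : ℕ) (j : ℤ) : Set UnitAddCircle :=
  (fun x : ℝ => (x : UnitAddCircle)) ''
    Set.Ioo ((j : ℝ) / (d : ℝ) ^ n) (((j : ℝ) + 1) / (d : ℝ) ^ n)

/-- `I` is an aligned arc of level `n` (with respect to the base `d`). -/
def IsAlignedArc (d n : ℕ) (I : Set UnitAddCircle) : Prop :=
  ∃ j : ℤ, I = alignedArc d n j

/-- Multiplication by `d` on the circle `ℝ/ℤ`. -/
def mulMap (d : ℕ) : UnitAddCircle → UnitAddCircle := fun x => d • x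

/-- The set of connected components of a subset of the circle. -/
def componentsOf (S : Set UnitAddCircle) : Set (Set UnitAddCircle) :=
  {C | ∃ x ∈ S, C = connectedComponentIn S x}

/-- All connected components of the preimages `g⁻¹(I)`, `I ∈ F`, where `g = mulMap d`. -/
def compFamily (d : ℕ) (F : Set (Set UnitAddCircle)) : Set (Set UnitAddCircle) :=
  ⋃ I ∈ F, componentsOf (mulMap d ⁻¹' I)

/-- The closed arc in `ℝ/ℤ` that is the image of the closed interval `[a, a + ℓ] ⊂ ℝ`
(a closed arc of length `ℓ`, degenerate to a point if `ℓ = 0`). -/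
def closedArc (a ℓ : ℝ) : Set UnitAddCircle :=
  (fun x : ℝ => (x : UnitAddCircle)) '' Set.Icc a (a + ℓ)

/-!
Lift to `ℝ` and rescale by `d ^ (N + n)`. If `0 ≤ j₁ < j₂ < j₃ < d ^ N` are the indices of the
three arcs, `g⁻ⁿ(A₀)` lifts to the union of the unit intervals `(s m, s m + 1)`, where `s : ℤ → ℤ`
is the increasing enumeration of `{j₁, j₂, j₃} + d ^ N ℤ`; it satisfies
`s (m + 3 * d ^ n) = s m + d ^ (N + n)`. The complement of such a union is the union of the gaps
`[s m + 1, s (m + 1)]`, which are pairwise disjoint, and shorter than `d ^ N` because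
`s (m + 3) = s m + d ^ N`. One period of gaps projects to the `3 * d ^ n` arcs.
-/
open Function

section StrictMonoInt

variable {s : ℤ → ℤ}

lemma StrictMono.sub_le_sub_int (hs : StrictMono s) {m m' : ℤ} (h : m ≤ m') :
    m' - m ≤ s m' - s m := by
  induction m', h using Int.leInduction with
  | base => simp
  | succ k _ ih => have := hs (lt_add_one k); omega

lemma StrictMono.exists_intCast_lt_le (hs : StrictMono s) (y : ℝ) :
    ∃ m, (s m : ℝ) < y ∧ y ≤ s (m + 1) := by
  have hbdd : ∃ b : ℤ, ∀ m, (s m : ℝ) < y → m ≤ b := by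
    refine ⟨max 0 (⌈y⌉ - s 0), fun m hm => ?_⟩
    have hm' : s m < ⌈y⌉ := by exact_mod_cast hm.trans_le (Int.le_ceil y)
    by_contra! h
    have := hs.sub_le_sub_int (le_of_max_le_left h.le)
    omega
  have hne : ∃ m, (s m : ℝ) < y := by
    refine ⟨min 0 (⌊y⌋ - s 0) - 1, ?_⟩
    have := hs.sub_le_sub_int (show min 0 (⌊y⌋ - s 0) - 1 ≤ 0 by omega)
    have : s (min 0 (⌊y⌋ - s 0) - 1) < ⌊y⌋ := by omega
    exact (Int.cast_lt.mpr this).trans_le (Int.floor_le y)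
  obtain ⟨m, hm, hmax⟩ := Int.exists_greatest_of_bdd hbdd hne
  exact ⟨m, hm, not_lt.mp fun h => (lt_add_one m).not_ge (hmax _ h)⟩

lemma StrictMono.compl_iUnion_Ioo_intCast (hs : StrictMono s) :
    (⋃ m, Ioo (s m : ℝ) (s m + 1))ᶜ = ⋃ m, Icc (s m + 1 : ℝ) (s (m + 1)) := by
  ext y
  simp only [mem_compl_iff, mem_iUnion, mem_Ioo, mem_Icc, not_exists, not_and, not_lt]
  constructor
  · intro h
    obtain ⟨m, hm, hm'⟩ := hs.exists_intCast_lt_le y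
    exact ⟨m, h m hm, hm'⟩
  · rintro ⟨m, h1, h2⟩ m' h'
    rcases le_or_gt m' m with hle | hlt
    · have : (s m' : ℝ) ≤ s m := Int.cast_le.mpr (hs.monotone hle)
      linarith
    · have : (s (m + 1) : ℝ) ≤ s m' := Int.cast_le.mpr (hs.monotone hlt)
      linarith

lemma StrictMono.pairwise_disjoint_Icc_intCast (hs : StrictMono s) :
    Pairwise (Disjoint on fun m => Icc (s m + 1 : ℝ) (s (m + 1))) := by
  refine (pairwise_disjoint_on _).mpr fun m m' hlt => Set.disjoint_left.mpr ?_
  rintro y ⟨-, h1⟩ ⟨h2, -⟩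
  have : (s (m + 1) : ℝ) ≤ s m' := Int.cast_le.mpr (hs.monotone hlt)
  linarith

end StrictMonoInt

lemma Int.apply_add_mul_eq_of_apply_add_eq {s : ℤ → ℤ} {K c : ℤ}
    (hper : ∀ m, s (m + K) = s m + c) (m t : ℤ) : s (m + t * K) = s m + t * c := by
  induction t using Int.induction_on with
  | zero => simp
  | succ t ih => rw [add_one_mul, ← add_assoc, hper, ih]; ring
  | pred t ih =>
    have := hper (m + (-t - 1) * K)
    rw [show m + (-t - 1) * K + K = m + -t * K by ring, ih] at this
    linarith

lemma Int.exists_fin_add_mul {K : ℕ} (hK : K ≠ 0) (m : ℤ) :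
    ∃ (r : Fin K) (t : ℤ), m = r + t * K := by
  have h0 := Int.emod_nonneg m (Int.natCast_ne_zero.mpr hK)
  have h1 := Int.emod_lt_of_pos m (Int.natCast_pos.mpr (Nat.pos_of_ne_zero hK))
  refine ⟨⟨(m % K).toNat, by omega⟩, m / K, ?_⟩
  simp only [Int.toNat_of_nonneg h0, Int.emod_add_ediv_mul]

namespace UnitAddCircle

lemma coe_mem_image_coe_iff {S : Set ℝ} {y : ℝ} :
    (y : UnitAddCircle) ∈ (fun x : ℝ => (x : UnitAddCircle)) '' S ↔ ∃ t : ℤ, y - t ∈ S := by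
  constructor
  · rintro ⟨x, hx, hxy⟩
    have hyx : ((y - x : ℝ) : UnitAddCircle) = 0 := by
      simp only at hxy
      rw [AddCircle.coe_sub, hxy, sub_self]
    obtain ⟨t, ht⟩ := (AddCircle.coe_eq_zero_iff 1).mp hyx
    exact ⟨t, by rwa [← zsmul_one, ht, sub_sub_cancel]⟩
  · rintro ⟨t, ht⟩
    refine ⟨y - t, ht, ?_⟩
    simp

variable {M a b y : ℝ}

lemma coe_mem_image_Ioo_div_iff (hM : 0 < M) :
    (y : UnitAddCircle) ∈ (fun x : ℝ => (x : UnitAddCircle)) '' Ioo (a / M) (b / M) ↔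
      ∃ t : ℤ, M * y - t * M ∈ Ioo a b := by
  simp only [coe_mem_image_coe_iff, mem_Ioo, div_lt_iff₀ hM, lt_div_iff₀ hM]
  exact exists_congr fun t => by constructor <;> rintro ⟨h1, h2⟩ <;> constructor <;> linarith

lemma coe_mem_closedArc_div_iff (hM : 0 < M) :
    (y : UnitAddCircle) ∈ closedArc (a / M) ((b - a) / M) ↔ ∃ t : ℤ, M * y - t * M ∈ Icc a b := by
  rw [closedArc, ← add_div, add_sub_cancel]
  simp only [coe_mem_image_coe_iff, mem_Icc, div_le_iff₀ hM, le_div_iff₀ hM]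
  exact exists_congr fun t => by constructor <;> rintro ⟨h1, h2⟩ <;> constructor <;> linarith

lemma coe_mem_alignedArc_iff {d : ℕ} (hd : 0 < d) (L : ℕ) (j : ℤ) :
    (y : UnitAddCircle) ∈ alignedArc d L j ↔
      ∃ t : ℤ, (d : ℝ) ^ L * y - t * (d : ℝ) ^ L ∈ Ioo (j : ℝ) (j + 1) :=
  coe_mem_image_Ioo_div_iff (by positivity)

end UnitAddCircle

lemma mulMap_iterate_coe (d n : ℕ) (x : ℝ) :
    (mulMap d)^[n] (x : UnitAddCircle) = (((d : ℝ) ^ n * x : ℝ) : UnitAddCircle) := by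
  rw [show mulMap d = (d • ·) from rfl, smul_iterate, ← Nat.cast_pow, ← nsmul_eq_mul,
    AddCircle.coe_nsmul]

section PeriodicExtension

open scoped Fin.IntCast

variable {k : ℕ} [NeZero k]

/-- For increasing `f` with values in `[0, P)`, this is the increasing enumeration of
`range f + P ℤ`; here `(m : Fin k)` is `m mod k`. -/
def Fin.periodicExtension (f : Fin k → ℤ) (P : ℤ) (m : ℤ) : ℤ :=
  f m + m / k * P

variable {f : Fin k → ℤ} {P : ℤ}

lemma Fin.periodicExtension_add_mul (r : Fin k) (t : ℤ) :
    periodicExtension f P (r + t * k) = f r + t * P := by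
  have hk : (k : ℤ) ≠ 0 := Int.natCast_ne_zero.mpr (NeZero.ne k)
  have hr : (r : ℤ) / k = 0 := Int.ediv_eq_zero_of_lt (by omega) (by omega)
  have hcast : (((r : ℤ) + t * k : ℤ) : Fin k) = r := by
    ext
    rw [Fin.val_intCast, Int.add_mul_emod_self_right, Int.emod_eq_of_lt (by omega) (by omega)]
    simp
  rw [periodicExtension, hcast, Int.add_mul_ediv_right _ _ hk, hr, zero_add]

lemma Fin.periodicExtension_add (m : ℤ) :
    periodicExtension f P (m + k) = periodicExtension f P m + P := by
  obtain ⟨r, t, rfl⟩ := Int.exists_fin_add_mul (NeZero.ne k) m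
  rw [add_assoc, ← add_one_mul, periodicExtension_add_mul, periodicExtension_add_mul]
  ring

lemma Fin.strictMono_periodicExtension (hf : StrictMono f) (hf_mem : ∀ r, f r ∈ Ico 0 P) :
    StrictMono (periodicExtension f P) := by
  intro m m' hlt
  obtain ⟨r, t, rfl⟩ := Int.exists_fin_add_mul (NeZero.ne k) m
  obtain ⟨r', t', rfl⟩ := Int.exists_fin_add_mul (NeZero.ne k) m'
  rw [periodicExtension_add_mul, periodicExtension_add_mul]
  have hr := r.isLt
  have hr' := r'.isLt
  rcases lt_trichotomy t t' with htt | rfl | htt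
  · have hP : 0 ≤ P := (hf_mem r').1.trans (hf_mem r').2.le
    have := mul_le_mul_of_nonneg_right (Int.add_one_le_of_lt htt) hP
    linarith [(hf_mem r).2, (hf_mem r').1]
  · have : r < r' := Fin.lt_def.mpr (by omega)
    linarith [hf this]
  · have := mul_le_mul_of_nonneg_right (Int.add_one_le_of_lt htt) (Int.natCast_nonneg k)
    linarith

end PeriodicExtension

section AlignedArc

variable {d N : ℕ}

lemma alignedArc_nonempty (hd : 0 < d) (j : ℤ) : (alignedArc d N j).Nonempty :=
  (nonempty_Ioo.mpr (div_lt_div_of_pos_right (lt_add_one _) (by positivity))).image _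

lemma alignedArc_add_mul (hd : 0 < d) (j t : ℤ) :
    alignedArc d N (j + t * d ^ N) = alignedArc d N j := by
  refine QuotientAddGroup.mk_surjective.preimage_injective (ext fun y => ?_)
  simp only [mem_preimage, UnitAddCircle.coe_mem_alignedArc_iff hd, mem_Ioo]
  push_cast
  constructor
  · rintro ⟨u, h1, h2⟩
    exact ⟨u + t, by push_cast; constructor <;> linarith⟩
  · rintro ⟨u, h1, h2⟩
    exact ⟨u - t, by push_cast; constructor <;> linarith⟩

lemma IsAlignedArc.exists_mem_Ico {I : Set UnitAddCircle} (hd : 0 < d)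
    (hI : IsAlignedArc d N I) :
    ∃ j ∈ Ico 0 ((d : ℤ) ^ N), I = alignedArc d N j := by
  obtain ⟨j, rfl⟩ := hI
  have hP : (0 : ℤ) < d ^ N := by positivity
  refine ⟨j % d ^ N, ⟨Int.emod_nonneg j hP.ne', Int.emod_lt_of_pos j hP⟩, ?_⟩
  rw [← alignedArc_add_mul hd (j % d ^ N) (j / d ^ N), Int.emod_add_ediv_mul]

lemma ne_of_disjoint_alignedArc (hd : 0 < d) {j j' : ℤ}
    (h : Disjoint (alignedArc d N j) (alignedArc d N j')) : j ≠ j' := by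
  rintro rfl
  exact (alignedArc_nonempty hd j).ne_empty (disjoint_self.mp h)

end AlignedArc

section PeriodicAlignedArcs

variable {d L K : ℕ} {s : ℤ → ℤ}

lemma coe_mem_iUnion_alignedArc_iff (hd : 0 < d) (hper : ∀ m, s (m + K) = s m + d ^ L) (y : ℝ) :
    (y : UnitAddCircle) ∈ ⋃ m, alignedArc d L (s m) ↔
      ∃ m, (d : ℝ) ^ L * y ∈ Ioo (s m : ℝ) (s m + 1) := by
  simp only [mem_iUnion, UnitAddCircle.coe_mem_alignedArc_iff hd]
  constructor
  · rintro ⟨m, t, h1, h2⟩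
    refine ⟨m + t * K, ?_⟩
    rw [Int.apply_add_mul_eq_of_apply_add_eq hper]
    push_cast
    constructor <;> linarith
  · rintro ⟨m, hm⟩
    exact ⟨m, 0, by simpa using hm⟩

lemma coe_mem_closedArc_between_iff (hd : 0 < d) (hper : ∀ m, s (m + K) = s m + d ^ L)
    (i : ℤ) (y : ℝ) :
    (y : UnitAddCircle) ∈
        closedArc ((s i + 1) / (d : ℝ) ^ L) ((s (i + 1) - (s i + 1)) / (d : ℝ) ^ L) ↔
      ∃ t : ℤ, (d : ℝ) ^ L * y ∈ Icc (s (i + t * K) + 1 : ℝ) (s (i + t * K + 1)) := by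
  rw [UnitAddCircle.coe_mem_closedArc_div_iff (by positivity)]
  refine exists_congr fun t => ?_
  rw [add_right_comm, Int.apply_add_mul_eq_of_apply_add_eq hper,
    Int.apply_add_mul_eq_of_apply_add_eq hper]
  push_cast
  simp only [mem_Icc]
  constructor <;> rintro ⟨h1, h2⟩ <;> constructor <;> linarith

lemma ne_zero_of_apply_add_eq_add_pow (hd : 0 < d) (hper : ∀ m, s (m + K) = s m + d ^ L) :
    K ≠ 0 := by
  rintro rfl
  have := hper 0
  simp only [Nat.cast_zero, add_zero, left_eq_add] at this
  exact absurd this (by positivity)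

theorem compl_iUnion_alignedArc (hd : 0 < d) (hs : StrictMono s)
    (hper : ∀ m, s (m + K) = s m + d ^ L) :
    (⋃ m, alignedArc d L (s m))ᶜ =
      ⋃ i : Fin K, closedArc ((s i + 1) / (d : ℝ) ^ L) ((s (i + 1) - (s i + 1)) / (d : ℝ) ^ L) := by
  refine QuotientAddGroup.mk_surjective.preimage_injective (ext fun y => ?_)
  have hreal := Set.ext_iff.mp hs.compl_iUnion_Ioo_intCast ((d : ℝ) ^ L * y)
  simp only [mem_compl_iff, mem_iUnion] at hreal
  simp only [mem_preimage, mem_compl_iff, coe_mem_iUnion_alignedArc_iff hd hper, mem_iUnion,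
    coe_mem_closedArc_between_iff hd hper, hreal]
  constructor
  · rintro ⟨m, hm⟩
    obtain ⟨r, t, rfl⟩ := Int.exists_fin_add_mul (ne_zero_of_apply_add_eq_add_pow hd hper) m
    exact ⟨r, t, hm⟩
  · rintro ⟨r, t, h⟩
    exact ⟨_, h⟩

theorem pairwise_disjoint_closedArc_between (hd : 0 < d) (hs : StrictMono s)
    (hper : ∀ m, s (m + K) = s m + d ^ L) :
    Pairwise (Disjoint on fun i : Fin K =>
      closedArc ((s i + 1) / (d : ℝ) ^ L) ((s (i + 1) - (s i + 1)) / (d : ℝ) ^ L)) := by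
  intro i j hij
  refine Set.disjoint_left.mpr fun z hzi hzj => hij ?_
  obtain ⟨y, rfl⟩ := QuotientAddGroup.mk_surjective z
  obtain ⟨t, ht⟩ := (coe_mem_closedArc_between_iff hd hper i y).mp hzi
  obtain ⟨t', ht'⟩ := (coe_mem_closedArc_between_iff hd hper j y).mp hzj
  have heq := hs.pairwise_disjoint_Icc_intCast.eq (Set.not_disjoint_iff.mpr ⟨_, ht, ht'⟩)
  have hmod := congrArg (· % (K : ℤ)) heq
  simp only [Int.add_mul_emod_self_right, Int.emod_eq_of_lt (Int.natCast_nonneg _)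
    (Int.ofNat_lt.mpr (Fin.isLt _))] at hmod
  exact Fin.ext (by exact_mod_cast hmod)

end PeriodicAlignedArcs

lemma mulMap_iterate_preimage_alignedArc {d : ℕ} (hd : 0 < d) (N n : ℕ) (j : ℤ) :
    (mulMap d)^[n] ⁻¹' alignedArc d N j = ⋃ t : ℤ, alignedArc d (N + n) (j + t * d ^ N) := by
  refine QuotientAddGroup.mk_surjective.preimage_injective (ext fun y => ?_)
  simp only [mem_preimage, mulMap_iterate_coe, mem_iUnion,
    UnitAddCircle.coe_mem_alignedArc_iff hd, pow_add, mem_Ioo]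
  push_cast
  constructor
  · rintro ⟨t, h1, h2⟩
    exact ⟨t, 0, by push_cast; constructor <;> linarith⟩
  · rintro ⟨t, u, h1, h2⟩
    exact ⟨u * d ^ n + t, by push_cast; constructor <;> linarith⟩

lemma mulMap_iterate_preimage_iUnion_alignedArc {d k : ℕ} [NeZero k] (hd : 0 < d) (N n : ℕ)
    (f : Fin k → ℤ) :
    (mulMap d)^[n] ⁻¹' ⋃ r, alignedArc d N (f r) =
      ⋃ m, alignedArc d (N + n) (Fin.periodicExtension f (d ^ N) m) := by
  simp only [preimage_iUnion, mulMap_iterate_preimage_alignedArc hd]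
  ext x
  simp only [mem_iUnion]
  constructor
  · rintro ⟨r, t, h⟩
    exact ⟨r + t * k, by rwa [Fin.periodicExtension_add_mul]⟩
  · rintro ⟨m, h⟩
    obtain ⟨r, t, rfl⟩ := Int.exists_fin_add_mul (NeZero.ne k) m
    exact ⟨r, t, by rwa [Fin.periodicExtension_add_mul] at h⟩

theorem compl_preimage_iUnion_alignedArc {d k : ℕ} [NeZero k] (hd : 0 < d) (N n : ℕ)
    (f : Fin k → ℤ) (hf : StrictMono f) (hf_mem : ∀ r, f r ∈ Ico 0 ((d : ℤ) ^ N)) :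
    ∃ a ℓ : Fin (k * d ^ n) → ℝ,
      (∀ i, 0 ≤ ℓ i) ∧
      (∀ i, ℓ i < ((d : ℝ) ^ n)⁻¹) ∧
      Pairwise (Disjoint on fun i => closedArc (a i) (ℓ i)) ∧
      ((mulMap d)^[n] ⁻¹' ⋃ r, alignedArc d N (f r))ᶜ = ⋃ i, closedArc (a i) (ℓ i) := by
  set s := Fin.periodicExtension f ((d : ℤ) ^ N)
  have hs : StrictMono s := Fin.strictMono_periodicExtension hf hf_mem
  have hs_add : ∀ m, s (m + k) = s m + d ^ N := Fin.periodicExtension_add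
  have hper : ∀ m, s (m + (k * d ^ n : ℕ)) = s m + d ^ (N + n) := fun m => by
    rw [Nat.cast_mul, mul_comm, Nat.cast_pow, Int.apply_add_mul_eq_of_apply_add_eq hs_add,
      pow_add, mul_comm]
  have hgap : ∀ m, s m + 1 ≤ s (m + 1) ∧ s (m + 1) ≤ s m + d ^ N := fun m =>
    ⟨hs (lt_add_one m), by
      rw [← hs_add]
      exact hs.monotone (by have := NeZero.pos k; omega)⟩
  refine ⟨fun i => (s i + 1) / (d : ℝ) ^ (N + n),
    fun i => (s (i + 1) - (s i + 1)) / (d : ℝ) ^ (N + n), fun i => ?_, fun i => ?_,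
    pairwise_disjoint_closedArc_between hd hs hper, ?_⟩
  · have : ((s i + 1 : ℤ) : ℝ) ≤ s (i + 1) := Int.cast_le.mpr (hgap i).1
    push_cast at this
    exact div_nonneg (by linarith) (by positivity)
  · have : (s (i + 1) : ℝ) ≤ s i + (d : ℝ) ^ N := by exact_mod_cast (hgap i).2
    rw [div_lt_iff₀ (by positivity), pow_add, mul_comm ((d : ℝ) ^ N), ← mul_assoc,
      inv_mul_cancel₀ (by positivity), one_mul]
    linarith
  · rw [mulMap_iterate_preimage_iUnion_alignedArc hd, compl_iUnion_alignedArc hd hs hper]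

theorem compl_preimage_union_closedArcs_general (d N : ℕ) (hd : 2 ≤ d)
    (I₁ I₂ I₃ : Set UnitAddCircle)
    (hI₁ : IsAlignedArc d N I₁) (hI₂ : IsAlignedArc d N I₂) (hI₃ : IsAlignedArc d N I₃)
    (hd₁₂ : Disjoint I₁ I₂) (hd₁₃ : Disjoint I₁ I₃) (hd₂₃ : Disjoint I₂ I₃)
    (n : ℕ) :
    ∃ a ℓ : Fin (3 * d ^ n) → ℝ,
      (∀ i, 0 ≤ ℓ i) ∧
      (∀ i, ℓ i < ((d : ℝ) ^ n)⁻¹) ∧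
      Pairwise (Function.onFun Disjoint fun i => closedArc (a i) (ℓ i)) ∧
      ((mulMap d)^[n] ⁻¹' (I₁ ∪ I₂ ∪ I₃))ᶜ = ⋃ i, closedArc (a i) (ℓ i) := by
  have hd₀ : 0 < d := by omega
  obtain ⟨j₁, hj₁, rfl⟩ := hI₁.exists_mem_Ico hd₀
  obtain ⟨j₂, hj₂, rfl⟩ := hI₂.exists_mem_Ico hd₀
  obtain ⟨j₃, hj₃, rfl⟩ := hI₃.exists_mem_Ico hd₀
  set T : Finset ℤ := {j₁, j₂, j₃}
  have hT : T.card = 3 := Finset.card_eq_three.mpr ⟨j₁, j₂, j₃,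
    ne_of_disjoint_alignedArc hd₀ hd₁₂, ne_of_disjoint_alignedArc hd₀ hd₁₃,
    ne_of_disjoint_alignedArc hd₀ hd₂₃, rfl⟩
  have hunion : ⋃ r, alignedArc d N (T.orderEmbOfFin hT r) =
      alignedArc d N j₁ ∪ alignedArc d N j₂ ∪ alignedArc d N j₃ := by
    rw [← biUnion_range, Finset.range_orderEmbOfFin]
    simp only [T, Finset.coe_insert, Finset.coe_singleton, biUnion_insert, biUnion_singleton,
      union_assoc]
  have hmem (r : Fin 3) : T.orderEmbOfFin hT r ∈ Ico 0 ((d : ℤ) ^ N) := by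
    have := T.orderEmbOfFin_mem hT r
    simp only [T, Finset.mem_insert, Finset.mem_singleton] at this
    rcases this with h | h | h <;> rw [h] <;> assumption
  rw [← hunion]
  exact compl_preimage_iUnion_alignedArc hd₀ N n _ (T.orderEmbOfFin hT).strictMono hmem

/-- for three pairwise disjoint aligned arcs of level `N` with union `A₀`,
the set `𝕋 \ g⁻ⁿ(A₀)` is a union of `3·dⁿ` pairwise disjoint closed arcs (possibly
degenerate to points), each of length strictly less than `d⁻ⁿ`. -/
theorem compl_preimage_union_closedArcs (d N : ℕ) (hd : 2 ≤ d) (hN : 1 ≤ N)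
    (I₁ I₂ I₃ : Set UnitAddCircle)
    (hI₁ : IsAlignedArc d N I₁) (hI₂ : IsAlignedArc d N I₂) (hI₃ : IsAlignedArc d N I₃)
    (hd₁₂ : Disjoint I₁ I₂) (hd₁₃ : Disjoint I₁ I₃) (hd₂₃ : Disjoint I₂ I₃)
    (n : ℕ) :
    ∃ a ℓ : Fin (3 * d ^ n) → ℝ,
      (∀ i, 0 ≤ ℓ i) ∧
      (∀ i, ℓ i < ((d : ℝ) ^ n)⁻¹) ∧
      Pairwise (Function.onFun Disjoint fun i => closedArc (a i) (ℓ i)) ∧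
      ((mulMap d)^[n] ⁻¹' (I₁ ∪ I₂ ∪ I₃))ᶜ = ⋃ i, closedArc (a i) (ℓ i) :=
  compl_preimage_union_closedArcs_general d N hd I₁ I₂ I₃ hI₁ hI₂ hI₃ hd₁₂ hd₁₃ hd₂₃ n
end
end

section
/- Under the setup, suppose that for some n ≥ 0 the set 𝕋 \ A_n can be covered by c closed arcs each of length d^{-(N+n)}. Then 𝕋 \ A_{n+1} can be covered by d·c + 2(d−1) closed arcs each of length d^{-(N+n+1)}. -/
/-!
Every arc of `𝓘 n` lies in an open arc of length `d^-(N+n)`: the preimage under `g` of an open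
arc of length `ℓ ≤ 1` consists of `d` pairwise disjoint open arcs of length `ℓ / d`, and a
component of the preimage, being connected, lies in one of them. A point outside `A (n+1)` either
is mapped outside `A n`, and then lies in one of the `d` closed arcs of length `d^-(N+n+1)` over
one of the `c` given arcs, or it lies in one of the `2(d-1)` removed components, each of which
sits in a closed arc of that length.
-/

open Set

noncomputable section

open Function

def openArc (a ℓ : ℝ) : Set UnitAddCircle :=
  (fun x : ℝ => (x : UnitAddCircle)) '' Set.Ioo a (a + ℓ)

theorem IsPreconnected.exists_subset_of_pairwise_disjoint {X ι : Type*} [TopologicalSpace X]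
    {s : Set X} (hs : IsPreconnected s) (hne : s.Nonempty) {U : ι → Set X}
    (hU : ∀ i, IsOpen (U i)) (hdisj : Pairwise (Disjoint on U)) (hsU : s ⊆ ⋃ i, U i) :
    ∃ i, s ⊆ U i := by
  obtain ⟨x, hx⟩ := hne
  obtain ⟨i, hxi⟩ := mem_iUnion.1 (hsU hx)
  refine ⟨i, hs.subset_left_of_subset_union (hU i) (isOpen_biUnion fun j _ => hU j)
    (disjoint_iUnion₂_right.2 fun j hj => hdisj (Ne.symm hj)) ?_ ⟨x, hx, hxi⟩⟩
  intro y hy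
  obtain ⟨j, hyj⟩ := mem_iUnion.1 (hsU hy)
  by_cases hji : j = i
  · exact Or.inl (hji ▸ hyj)
  · exact Or.inr (mem_iUnion₂.2 ⟨j, hji, hyj⟩)

theorem coe_mem_image_coe_iff {s : Set ℝ} {y : ℝ} :
    (y : UnitAddCircle) ∈ (fun x : ℝ => (x : UnitAddCircle)) '' s ↔ ∃ p : ℤ, y + p ∈ s := by
  constructor
  · rintro ⟨x, hx, hxy : (x : UnitAddCircle) = y⟩
    obtain ⟨p, hp⟩ := (AddCircle.coe_eq_zero_iff (p := (1 : ℝ))).1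
      (by rw [AddCircle.coe_sub, hxy, sub_self] : ((x - y : ℝ) : UnitAddCircle) = 0)
    refine ⟨p, ?_⟩
    rwa [show y + p = x by simp only [zsmul_eq_mul, mul_one] at hp; linarith]
  · rintro ⟨p, hp⟩
    exact ⟨y + p, hp, by simp⟩

theorem mulMap_coe (d : ℕ) (y : ℝ) :
    mulMap d (y : UnitAddCircle) = ((d * y : ℝ) : UnitAddCircle) := by
  simp [mulMap]

theorem preimage_mul_sub_Ioo {d : ℝ} (hd : 0 < d) (k a ℓ : ℝ) :
    (fun x => d * x - k) ⁻¹' Ioo a (a + ℓ) = Ioo ((a + k) / d) ((a + k) / d + ℓ / d) := by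
  ext x
  rw [← add_div]
  simp only [mem_preimage, mem_Ioo, div_lt_iff₀ hd, lt_div_iff₀ hd]
  constructor <;> rintro ⟨h₁, h₂⟩ <;> constructor <;> linarith

theorem preimage_mul_sub_Icc {d : ℝ} (hd : 0 < d) (k a ℓ : ℝ) :
    (fun x => d * x - k) ⁻¹' Icc a (a + ℓ) = Icc ((a + k) / d) ((a + k) / d + ℓ / d) := by
  ext x
  rw [← add_div]
  simp only [mem_preimage, mem_Icc, div_le_iff₀ hd, le_div_iff₀ hd]
  constructor <;> rintro ⟨h₁, h₂⟩ <;> constructor <;> linarith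

theorem mulMap_preimage_image_coe_subset {d : ℕ} (hd : 0 < d) (s : Set ℝ) :
    mulMap d ⁻¹' ((fun x : ℝ => (x : UnitAddCircle)) '' s) ⊆
      ⋃ k : Fin d, (fun x : ℝ => (x : UnitAddCircle)) '' ((fun x => d * x - (k : ℕ)) ⁻¹' s) := by
  intro z hz
  obtain ⟨y, rfl⟩ := QuotientAddGroup.mk_surjective z
  rw [mem_preimage, mulMap_coe, coe_mem_image_coe_iff] at hz
  obtain ⟨p, hp⟩ := hz
  have hd' : (0 : ℤ) < d := by exact_mod_cast hd
  -- `-p = d q + k` with `0 ≤ k < d` gives `d y + p = d (y - q) - k`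
  obtain ⟨k, hk⟩ : ∃ k : ℕ, (k : ℤ) = -p % d :=
    ⟨_, Int.toNat_of_nonneg (Int.emod_nonneg _ hd'.ne')⟩
  have hkd : k < d := by have := Int.emod_lt_of_pos (-p) hd'; omega
  have hdiv : ((d * (-p / d) + k : ℤ) : ℝ) = -p := by rw [hk, Int.mul_ediv_add_emod, Int.cast_neg]
  push_cast at hdiv
  refine mem_iUnion.2 ⟨⟨k, hkd⟩, y - (-p / d : ℤ), ?_, by simp⟩
  rw [mem_preimage]
  convert hp using 1
  linarith

theorem mulMap_preimage_openArc_subset {d : ℕ} (hd : 0 < d) (a ℓ : ℝ) :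
    mulMap d ⁻¹' openArc a ℓ ⊆ ⋃ k : Fin d, openArc ((a + (k : ℕ)) / d) (ℓ / d) := by
  simpa only [openArc, preimage_mul_sub_Ioo (Nat.cast_pos.2 hd)]
    using mulMap_preimage_image_coe_subset hd (Ioo a (a + ℓ))

theorem mulMap_preimage_closedArc_subset {d : ℕ} (hd : 0 < d) (a ℓ : ℝ) :
    mulMap d ⁻¹' closedArc a ℓ ⊆ ⋃ k : Fin d, closedArc ((a + (k : ℕ)) / d) (ℓ / d) := by
  simpa only [closedArc, preimage_mul_sub_Icc (Nat.cast_pos.2 hd)]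
    using mulMap_preimage_image_coe_subset hd (Icc a (a + ℓ))

theorem isOpen_openArc (a ℓ : ℝ) : IsOpen (openArc a ℓ) :=
  QuotientAddGroup.isOpenMap_coe _ isOpen_Ioo

theorem openArc_subset_closedArc (a ℓ : ℝ) : openArc a ℓ ⊆ closedArc a ℓ :=
  image_mono Ioo_subset_Icc_self

theorem pairwise_disjoint_openArc {d : ℕ} (a : ℝ) {ℓ : ℝ} (hℓ : ℓ ≤ 1) :
    Pairwise (Disjoint on fun k : Fin d => openArc ((a + (k : ℕ)) / d) (ℓ / d)) := by
  intro k k' hne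
  have hd : (0 : ℝ) < d := Nat.cast_pos.2 k.pos
  simp only [onFun, openArc, ← preimage_mul_sub_Ioo hd]
  rw [Set.disjoint_left]
  rintro _ ⟨t, ht, rfl⟩ ht'
  obtain ⟨p, hp⟩ := coe_mem_image_coe_iff.1 ht'
  simp only [mem_preimage, mem_Ioo] at ht hp
  have hlt : |((d * p + k - k' : ℤ) : ℝ)| < 1 := by
    push_cast
    rw [abs_lt]
    constructor <;> linarith
  have hzero : d * p + (k : ℤ) - k' = 0 := Int.abs_lt_one_iff.1 (by exact_mod_cast hlt)
  have hkk' : (k' - k : ℤ) = 0 := by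
    have := k.2
    have := k'.2
    exact Int.eq_zero_of_abs_lt_dvd (m := d) ⟨p, by linarith⟩ (by rw [abs_lt]; omega)
  exact hne (Fin.ext (by omega))

theorem exists_connectedComponentIn_mulMap_preimage_subset_openArc {d : ℕ} (hd : 0 < d)
    {S : Set UnitAddCircle} {a ℓ : ℝ} (hS : S ⊆ openArc a ℓ) (hℓ : ℓ ≤ 1)
    {x : UnitAddCircle} (hx : x ∈ mulMap d ⁻¹' S) :
    ∃ k : Fin d, connectedComponentIn (mulMap d ⁻¹' S) x ⊆ openArc ((a + (k : ℕ)) / d) (ℓ / d) :=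
  isPreconnected_connectedComponentIn.exists_subset_of_pairwise_disjoint
    ⟨x, mem_connectedComponentIn hx⟩ (fun _ => isOpen_openArc _ _) (pairwise_disjoint_openArc a hℓ)
    ((connectedComponentIn_subset _ _).trans
      ((preimage_mono hS).trans (mulMap_preimage_openArc_subset hd a ℓ)))

theorem exists_subset_openArc_of_mem_compFamily {d : ℕ} (hd : 0 < d)
    {F : Set (Set UnitAddCircle)} {ℓ : ℝ} (hℓ : ℓ ≤ 1) (hF : ∀ I ∈ F, ∃ a, I ⊆ openArc a ℓ) :
    ∀ C ∈ compFamily d F, ∃ a, C ⊆ openArc a (ℓ / d) := by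
  simp only [compFamily, componentsOf, mem_iUnion₂]
  rintro C ⟨I, hI, x, hx, rfl⟩
  obtain ⟨a, ha⟩ := hF I hI
  obtain ⟨k, hk⟩ := exists_connectedComponentIn_mulMap_preimage_subset_openArc hd ha hℓ hx
  exact ⟨_, hk⟩

theorem inv_pow_div_self {d : ℝ} (m : ℕ) : (d ^ m)⁻¹ / d = (d ^ (m + 1))⁻¹ := by
  rw [pow_succ, mul_inv, div_eq_mul_inv]

theorem exists_subset_openArc_pow_of_mem_compFamily {d : ℕ} (hd : 0 < d)
    {F : Set (Set UnitAddCircle)} {m : ℕ}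
    (hF : ∀ I ∈ F, ∃ a, I ⊆ openArc a ((d : ℝ) ^ m)⁻¹) :
    ∀ C ∈ compFamily d F, ∃ a, C ⊆ openArc a ((d : ℝ) ^ (m + 1))⁻¹ := by
  rw [← inv_pow_div_self]
  exact exists_subset_openArc_of_mem_compFamily hd
    (inv_le_one_of_one_le₀ (one_le_pow₀ (Nat.one_le_cast.2 hd))) hF

theorem exists_subset_openArc_of_mem {d N : ℕ} (hd : 0 < d) {𝓘 : ℕ → Set (Set UnitAddCircle)}
    (h0 : ∀ I ∈ 𝓘 0, ∃ a, I ⊆ openArc a ((d : ℝ) ^ N)⁻¹)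
    (hsucc : ∀ n, 𝓘 (n + 1) ⊆ compFamily d (𝓘 n)) (n : ℕ) :
    ∀ I ∈ 𝓘 n, ∃ a, I ⊆ openArc a ((d : ℝ) ^ (N + n))⁻¹ := by
  induction n with
  | zero => simpa using h0
  | succ n ih => exact fun I hI => exists_subset_openArc_pow_of_mem_compFamily hd ih I (hsucc n hI)

theorem alignedArc_eq_openArc (d n : ℕ) (j : ℤ) :
    alignedArc d n j = openArc (j / (d : ℝ) ^ n) ((d : ℝ) ^ n)⁻¹ := by
  rw [alignedArc, openArc, add_div, one_div]

theorem compl_sUnion_compFamily_diff_subset (d : ℕ) (F R : Set (Set UnitAddCircle)) :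
    (⋃₀ (compFamily d F \ R))ᶜ ⊆ mulMap d ⁻¹' (⋃₀ F)ᶜ ∪ ⋃₀ R := by
  intro x hx
  by_cases hgx : mulMap d x ∈ ⋃₀ F
  · obtain ⟨I, hI, hxI : x ∈ mulMap d ⁻¹' I⟩ := hgx
    have hC : connectedComponentIn (mulMap d ⁻¹' I) x ∈ compFamily d F :=
      mem_biUnion hI ⟨x, hxI, rfl⟩
    refine Or.inr ⟨_, ?_, mem_connectedComponentIn hxI⟩
    by_contra hCR
    exact hx ⟨_, ⟨hC, hCR⟩, mem_connectedComponentIn hxI⟩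
  · exact Or.inl hgx

theorem mulMap_preimage_iUnion_closedArc_subset {d : ℕ} (hd : 0 < d) {ι : Type*}
    (a : ι → ℝ) (ℓ : ℝ) :
    mulMap d ⁻¹' ⋃ i, closedArc (a i) ℓ ⊆
      ⋃ p : ι × Fin d, closedArc ((a p.1 + (p.2 : ℕ)) / d) (ℓ / d) := by
  rw [preimage_iUnion, iUnion_prod']
  exact iUnion_mono fun i => mulMap_preimage_closedArc_subset hd (a i) ℓ

theorem exists_fin_cover_of_finite {ι : Type*} [Finite ι] {m : ℕ} (hm : Nat.card ι = m)
    {S : Set UnitAddCircle} {b : ι → ℝ} {ℓ : ℝ} (hS : S ⊆ ⋃ i, closedArc (b i) ℓ) :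
    ∃ b' : Fin m → ℝ, S ⊆ ⋃ i, closedArc (b' i) ℓ :=
  let e := Finite.equivFinOfCardEq hm
  ⟨b ∘ e.symm, hS.trans_eq (e.symm.surjective.iUnion_comp fun i => closedArc (b i) ℓ).symm⟩

theorem cover_step_general (d N : ℕ) (hd : 2 ≤ d)
    (I₁ I₂ I₃ : Set UnitAddCircle)
    (hI₁ : IsAlignedArc d N I₁) (hI₂ : IsAlignedArc d N I₂) (hI₃ : IsAlignedArc d N I₃)
    (𝓘 : ℕ → Set (Set UnitAddCircle))
    (h0 : 𝓘 0 = {I₁, I₂, I₃})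
    (hrec : ∀ n, ∃ R ⊆ compFamily d (𝓘 n),
      R.ncard = 2 * (d - 1) ∧ 𝓘 (n + 1) = compFamily d (𝓘 n) \ R)
    (A : ℕ → Set UnitAddCircle) (hA : ∀ n, A n = ⋃ I ∈ 𝓘 n, I)
    (n c : ℕ) (a : Fin c → ℝ)
    (hcov : (A n)ᶜ ⊆ ⋃ i, closedArc (a i) (((d : ℝ) ^ (N + n))⁻¹)) :
    ∃ b : Fin (d * c + 2 * (d - 1)) → ℝ,
      (A (n + 1))ᶜ ⊆ ⋃ i, closedArc (b i) (((d : ℝ) ^ (N + n + 1))⁻¹) := by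
  have hd0 : 0 < d := by omega
  simp only [← sUnion_eq_biUnion] at hA
  have hbase : ∀ I ∈ 𝓘 0, ∃ a, I ⊆ openArc a ((d : ℝ) ^ N)⁻¹ := by
    have hI : ∀ I, IsAlignedArc d N I → ∃ a, I ⊆ openArc a ((d : ℝ) ^ N)⁻¹ := by
      rintro _ ⟨j, rfl⟩
      exact ⟨_, (alignedArc_eq_openArc d N j).subset⟩
    rw [h0]
    rintro I (rfl | rfl | rfl)
    exacts [hI _ hI₁, hI _ hI₂, hI _ hI₃]
  have hsucc : ∀ m, 𝓘 (m + 1) ⊆ compFamily d (𝓘 m) := fun m => by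
    obtain ⟨R, -, -, h⟩ := hrec m
    exact h ▸ sdiff_subset
  obtain ⟨R, hRsub, hRcard, hnext⟩ := hrec n
  have hR : ∀ C : R, ∃ t, (C : Set UnitAddCircle) ⊆ closedArc t ((d : ℝ) ^ (N + n + 1))⁻¹ :=
    fun C => (exists_subset_openArc_pow_of_mem_compFamily hd0
      (exists_subset_openArc_of_mem hd0 hbase hsucc n) C (hRsub C.2)).imp
        fun t ht => ht.trans (openArc_subset_closedArc _ _)
  choose t ht using hR
  have : Finite R := (Set.finite_of_ncard_ne_zero (by omega)).to_subtype
  refine exists_fin_cover_of_finite (ι := (Fin c × Fin d) ⊕ R)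
    (b := Sum.elim (fun p => (a p.1 + (p.2 : ℕ)) / d) t) ?_ ?_
  · rw [Nat.card_sum, Nat.card_prod, Nat.card_fin, Nat.card_fin, Nat.card_coe_set_eq, hRcard,
      mul_comm]
  · intro x hx
    rw [hA, hnext] at hx
    rcases compl_sUnion_compFamily_diff_subset d _ R hx with hx | ⟨C, hC, hxC⟩
    · rw [← hA] at hx
      obtain ⟨p, hp⟩ := mem_iUnion.1 (mulMap_preimage_iUnion_closedArc_subset hd0 a _ (hcov hx))
      rw [inv_pow_div_self] at hp
      exact mem_iUnion.2 ⟨Sum.inl p, hp⟩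
    · exact mem_iUnion.2 ⟨Sum.inr ⟨C, hC⟩, ht _ hxC⟩

/-- under the setup, if `𝕋 \ Aₙ` can be covered by `c` closed arcs of length
`d^-(N+n)`, then `𝕋 \ Aₙ₊₁` can be covered by `d·c + 2(d-1)` closed arcs of length
`d^-(N+n+1)`. -/
theorem cover_step (d N : ℕ) (hd : 2 ≤ d) (hN : 1 ≤ N)
    (I₁ I₂ I₃ : Set UnitAddCircle)
    (hI₁ : IsAlignedArc d N I₁) (hI₂ : IsAlignedArc d N I₂) (hI₃ : IsAlignedArc d N I₃)
    (hd₁₂ : Disjoint I₁ I₂) (hd₁₃ : Disjoint I₁ I₃) (hd₂₃ : Disjoint I₂ I₃)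
    (𝓘 : ℕ → Set (Set UnitAddCircle))
    (h0 : 𝓘 0 = {I₁, I₂, I₃})
    (hrec : ∀ n, ∃ R ⊆ compFamily d (𝓘 n),
      R.ncard = 2 * (d - 1) ∧ 𝓘 (n + 1) = compFamily d (𝓘 n) \ R)
    (A : ℕ → Set UnitAddCircle) (hA : ∀ n, A n = ⋃ I ∈ 𝓘 n, I)
    (n c : ℕ) (a : Fin c → ℝ)
    (hcov : (A n)ᶜ ⊆ ⋃ i, closedArc (a i) (((d : ℝ) ^ (N + n))⁻¹)) :
    ∃ b : Fin (d * c + 2 * (d - 1)) → ℝ,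
      (A (n + 1))ᶜ ⊆ ⋃ i, closedArc (b i) (((d : ℝ) ^ (N + n + 1))⁻¹) :=
  cover_step_general d N hd I₁ I₂ I₃ hI₁ hI₂ hI₃ 𝓘 h0 hrec A hA n c a hcov
end
end
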